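/- For every nonzero z = |z|(cos \alpha, sin \alpha) in R^2 and every k > 0, \int_0^{2\pi} sin^2(\theta) e^{i k |z| cos(\theta - \alpha)} d\theta = \pi J_0(k|z|) + \pi cos(2\alpha) J_2(k|z|). -/

import Mathlib

open Real MeasureTheory

/-- Bessel function of the first kind of order 0. -/
noncomputable def besselJ0 (t : ℝ) : ℝ :=
  ∑' p : ℕ, (-1 : ℝ)^p / ((Nat.factorial p : ℝ))^2 * (t/2)^(2*p)

/-- Bessel function of the first kind of order 2. -/
noncomputable def besselJ2 (t : ℝ) : ℝ :=
  ∑' p : ℕ, (-1 : ℝ)^p / ((Nat.factorial p : ℝ) * (Nat.factorial (2 + p) : ℝ)) * (t/2)^(2 + 2*p)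

/-!
After the substitution θ = x + α and 2π-periodicity, the integrand is sin²(x + α) e^{iρ cos x}
with ρ = k‖z‖, and sin²(x + α) = 1/2 - (cos 2α / 2) cos 2x + (sin 2α / 2) sin 2x.
The sin 2x part integrates to zero, being odd under x ↦ 2π - x. For the other two parts,
expand e^{iρ cos x} in its power series and integrate termwise (dominated convergence):
the moments ∫₀^{2π} cos^n x vanish for odd n and are 2π (2p)! / (4^p (p!)²) for n = 2p,
while ∫₀^{2π} cos 2x cos^n x = n/(n+2) ∫₀^{2π} cos^n x.
The resulting series are 2π J₀(ρ) and -2π J₂(ρ).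
-/

open scoped Nat
open Complex (I)

theorem integral_cos_pow_add_two_zero_two_pi (n : ℕ) :
    ∫ x in (0 : ℝ)..2 * π, cos x ^ (n + 2)
      = (n + 1) / (n + 2) * ∫ x in (0 : ℝ)..2 * π, cos x ^ n := by
  simp [integral_cos_pow]

theorem integral_cos_pow_odd_zero_two_pi (p : ℕ) :
    ∫ x in (0 : ℝ)..2 * π, cos x ^ (2 * p + 1) = 0 := by
  induction p with
  | zero => simp
  | succ p ih => rw [show 2 * (p + 1) + 1 = 2 * p + 1 + 2 by ring,
      integral_cos_pow_add_two_zero_two_pi, ih, mul_zero]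

theorem integral_cos_pow_even_zero_two_pi (p : ℕ) :
    ∫ x in (0 : ℝ)..2 * π, cos x ^ (2 * p) = 2 * π * (2 * p)! / (4 ^ p * p ! ^ 2) := by
  induction p with
  | zero => simp
  | succ p ih =>
    rw [show 2 * (p + 1) = 2 * p + 1 + 1 by ring, integral_cos_pow_add_two_zero_two_pi, ih]
    push_cast [Nat.factorial_succ]
    field_simp
    ring

theorem integral_cos_two_mul_mul_cos_pow_zero_two_pi (n : ℕ) :
    ∫ x in (0 : ℝ)..2 * π, cos (2 * x) * cos x ^ n
      = n / (n + 2) * ∫ x in (0 : ℝ)..2 * π, cos x ^ n := by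
  have h (x : ℝ) : cos (2 * x) * cos x ^ n = 2 * cos x ^ (n + 2) - cos x ^ n := by
    rw [cos_two_mul]; ring
  simp_rw [h]
  rw [intervalIntegral.integral_sub ((by fun_prop : Continuous _).intervalIntegrable _ _)
      ((by fun_prop : Continuous _).intervalIntegrable _ _), intervalIntegral.integral_const_mul,
    integral_cos_pow_add_two_zero_two_pi]
  field_simp
  ring

theorem hasSum_comp_two_mul_iff {M : Type*} [AddCommMonoid M] [TopologicalSpace M] {f : ℕ → M}
    {a : M} (hf : ∀ k, f (2 * k + 1) = 0) : HasSum (fun k ↦ f (2 * k)) a ↔ HasSum f a :=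
  (mul_right_injective₀ two_ne_zero).hasSum_iff fun n hn ↦ by
    obtain ⟨k, rfl | rfl⟩ := n.even_or_odd'
    · exact absurd ⟨k, rfl⟩ hn
    · exact hf k

theorem I_mul_ofReal_pow_two_mul (ρ : ℝ) (p : ℕ) :
    (I * ρ) ^ (2 * p) = ((-1) ^ p * ρ ^ (2 * p) : ℝ) := by
  push_cast
  rw [pow_mul, mul_pow, Complex.I_sq, pow_mul, ← mul_pow]

theorem hasSum_intervalIntegral_mul_exp_I_mul_cos {a b : ℝ} {w : ℝ → ℝ}
    (hw : IntervalIntegrable w volume a b) (ρ : ℝ) :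
    HasSum (fun n : ℕ ↦ (I * ρ) ^ n / n ! * ((∫ x in a..b, w x * cos x ^ n : ℝ) : ℂ))
      (∫ x in a..b, (w x : ℂ) * Complex.exp (I * (ρ * cos x))) := by
  have hterm (n : ℕ) : IntervalIntegrable (fun x ↦ w x * cos x ^ n) volume a b :=
    hw.mul_continuousOn (by fun_prop)
  have hbound (n : ℕ) (x : ℝ) :
      ‖(I * ρ) ^ n / n ! * ((w x * cos x ^ n : ℝ) : ℂ)‖ ≤ |w x| * (|ρ| ^ n / n !) := by
    have hcos : |cos x| ^ n ≤ 1 := pow_le_one₀ (abs_nonneg _) (abs_cos_le_one x)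
    calc _ = |w x| * (|ρ| ^ n / n !) * |cos x| ^ n := by
          simp only [norm_mul, norm_div, norm_pow, Complex.norm_I, Complex.norm_real,
            Complex.norm_natCast, Real.norm_eq_abs, one_mul]
          ring
      _ ≤ |w x| * (|ρ| ^ n / n !) := mul_le_of_le_one_right (by positivity) hcos
  have hexp (x : ℝ) : HasSum (fun n : ℕ ↦ (I * ρ) ^ n / n ! * ((w x * cos x ^ n : ℝ) : ℂ))
      ((w x : ℂ) * Complex.exp (I * (ρ * cos x))) := by
    rw [Complex.exp_eq_exp_ℂ]
    refine ((NormedSpace.expSeries_div_hasSum_exp (I * (ρ * cos x) : ℂ)).mul_left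
      (w x : ℂ)).congr_fun fun n ↦ ?_
    push_cast
    ring
  have hsum := intervalIntegral.hasSum_integral_of_dominated_convergence
    (fun n x ↦ |w x| * (|ρ| ^ n / n !))
    (fun n ↦ ((hterm n).def'.ofReal.const_mul _).aestronglyMeasurable)
    (fun n ↦ .of_forall fun x _ ↦ hbound n x)
    (.of_forall fun x _ ↦ (summable_pow_div_factorial |ρ|).mul_left _)
    (by simpa only [tsum_mul_left] using hw.abs.mul_const _)
    (.of_forall fun x _ ↦ hexp x)
  simpa only [intervalIntegral.integral_const_mul, intervalIntegral.integral_ofReal] using hsum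

theorem integral_exp_I_mul_cos (ρ : ℝ) :
    ∫ x in (0 : ℝ)..2 * π, Complex.exp (I * (ρ * cos x)) = (2 * π * besselJ0 ρ : ℝ) := by
  have h := hasSum_intervalIntegral_mul_exp_I_mul_cos (w := fun _ ↦ 1)
    (intervalIntegrable_const (a := 0) (b := 2 * π)) ρ
  simp only [one_mul, Complex.ofReal_one] at h
  rw [← hasSum_comp_two_mul_iff fun k ↦ by simp [integral_cos_pow_odd_zero_two_pi]] at h
  have hterm (p : ℕ) :
      (I * ρ) ^ (2 * p) / (2 * p)! * ((∫ x in (0 : ℝ)..2 * π, cos x ^ (2 * p) : ℝ) : ℂ)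
        = (2 * π * ((-1) ^ p / (p ! : ℝ) ^ 2 * (ρ / 2) ^ (2 * p)) : ℝ) := by
    rw [I_mul_ofReal_pow_two_mul, integral_cos_pow_even_zero_two_pi, ← Complex.ofReal_natCast,
      ← Complex.ofReal_div, ← Complex.ofReal_mul, div_pow, pow_mul (2 : ℝ)]
    congr 1
    have : ((2 * p)! : ℝ) ≠ 0 := by positivity
    field_simp
    norm_num
  simp only [hterm] at h
  rw [← h.tsum_eq, ← Complex.ofReal_tsum, tsum_mul_left, besselJ0]

theorem integral_cos_two_mul_mul_exp_I_mul_cos (ρ : ℝ) :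
    ∫ x in (0 : ℝ)..2 * π, (cos (2 * x) : ℂ) * Complex.exp (I * (ρ * cos x))
      = (-(2 * π) * besselJ2 ρ : ℝ) := by
  have h := hasSum_intervalIntegral_mul_exp_I_mul_cos (w := fun x ↦ cos (2 * x))
    ((by fun_prop : Continuous _).intervalIntegrable 0 (2 * π)) ρ
  simp only [integral_cos_two_mul_mul_cos_pow_zero_two_pi] at h
  -- the factor `n / (n + 2)` kills the `n = 0` term, which accounts for the index shift in `besselJ2`
  rw [← hasSum_comp_two_mul_iff fun k ↦ by simp [integral_cos_pow_odd_zero_two_pi],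
    ← hasSum_nat_add_iff' 1] at h
  have hterm (q : ℕ) : (I * ρ) ^ (2 * (q + 1)) / (2 * (q + 1))! *
      (((2 * (q + 1) : ℕ) / ((2 * (q + 1) : ℕ) + 2) *
        ∫ x in (0 : ℝ)..2 * π, cos x ^ (2 * (q + 1)) : ℝ) : ℂ)
      = (-(2 * π) * ((-1) ^ q / ((q ! : ℝ) * (2 + q)!) * (ρ / 2) ^ (2 + 2 * q)) : ℝ) := by
    rw [I_mul_ofReal_pow_two_mul, integral_cos_pow_even_zero_two_pi, ← Complex.ofReal_natCast,
      ← Complex.ofReal_div, ← Complex.ofReal_mul, div_pow, show 2 + 2 * q = 2 * (q + 1) by ring,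
      pow_mul (2 : ℝ), add_comm 2 q]
    congr 1
    have : ((2 * (q + 1))! : ℝ) ≠ 0 := by positivity
    push_cast [Nat.factorial_succ]
    field_simp
    ring
  simp only [hterm, Finset.range_one, Finset.sum_singleton, mul_zero, Nat.cast_zero, zero_div,
    zero_mul, Complex.ofReal_zero, sub_zero] at h
  rw [← h.tsum_eq, ← Complex.ofReal_tsum, tsum_mul_left, besselJ2]

theorem integral_sin_two_mul_mul_exp_I_mul_cos (ρ : ℝ) :
    ∫ x in (0 : ℝ)..2 * π, (sin (2 * x) : ℂ) * Complex.exp (I * (ρ * cos x)) = 0 := by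
  set f : ℝ → ℂ := fun x ↦ (sin (2 * x) : ℂ) * Complex.exp (I * (ρ * cos x))
  have hreflect (x : ℝ) : f (2 * π - x) = -f x := by
    simp only [f, sin_two_mul, sin_two_pi_sub, cos_two_pi_sub]
    push_cast
    ring
  refine self_eq_neg.mp ?_
  calc ∫ x in (0 : ℝ)..2 * π, f x = ∫ x in (0 : ℝ)..2 * π, f (2 * π - x) := by
        rw [intervalIntegral.integral_comp_sub_left, sub_self, sub_zero]
    _ = -∫ x in (0 : ℝ)..2 * π, f x := by simp_rw [hreflect, intervalIntegral.integral_neg]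

theorem integral_sin_add_sq_mul_exp_I_mul_cos (ρ α : ℝ) :
    ∫ x in (0 : ℝ)..2 * π, (sin (x + α) : ℂ) ^ 2 * Complex.exp (I * (ρ * cos x))
      = (π * besselJ0 ρ : ℝ) + (π * cos (2 * α) * besselJ2 ρ : ℝ) := by
  have hsplit (x : ℝ) (E : ℂ) : (sin (x + α) : ℂ) ^ 2 * E = 1 / 2 * E
      - (cos (2 * α) / 2 : ℝ) * ((cos (2 * x) : ℂ) * E)
      + (sin (2 * α) / 2 : ℝ) * ((sin (2 * x) : ℂ) * E) := by
    have : sin (x + α) ^ 2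
        = 1 / 2 - cos (2 * α) / 2 * cos (2 * x) + sin (2 * α) / 2 * sin (2 * x) := by
      rw [sin_sq_eq_half_sub, mul_add, cos_add]
      ring
    rw [← Complex.ofReal_pow, this]
    push_cast
    ring
  simp_rw [hsplit]
  rw [intervalIntegral.integral_add, intervalIntegral.integral_sub,
    intervalIntegral.integral_const_mul, intervalIntegral.integral_const_mul,
    intervalIntegral.integral_const_mul, integral_exp_I_mul_cos,
    integral_cos_two_mul_mul_exp_I_mul_cos, integral_sin_two_mul_mul_exp_I_mul_cos]
  · push_cast
    ring
  all_goals exact (by fun_prop : Continuous _).intervalIntegrable _ _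

theorem circle_integral_sin_sq_exp_general (z : ℝ × ℝ) (α k : ℝ) :
    ∫ θ in (0:ℝ)..(2*π),
        ((Real.sin θ)^2 : ℂ) * Complex.exp (Complex.I * (k * ‖z‖ * Real.cos (θ - α)))
      = (π * besselJ0 (k * ‖z‖) : ℝ) + (π * Real.cos (2*α) * besselJ2 (k * ‖z‖) : ℝ) := by
  set f : ℝ → ℂ := fun x ↦ (sin (x + α) : ℂ) ^ 2 * Complex.exp (I * ((k * ‖z‖ : ℝ) * cos x))
  have hf : Function.Periodic f (2 * π) := fun x ↦ by
    simp only [f, add_right_comm x, sin_add_two_pi, cos_add_two_pi]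
  calc _ = ∫ θ in (0 : ℝ)..2 * π, f (θ - α) := by
        simp only [f, sub_add_cancel, Complex.ofReal_mul]
    _ = ∫ x in (0 : ℝ)..2 * π, f x := by
        rw [intervalIntegral.integral_comp_sub_right, zero_sub, sub_eq_neg_add,
          hf.intervalIntegral_add_eq (-α) 0, zero_add]
    _ = _ := integral_sin_add_sq_mul_exp_I_mul_cos _ α

theorem circle_integral_sin_sq_exp (z : ℝ × ℝ) (hz : z ≠ 0) (α k : ℝ) (hk : 0 < k)
    (hzα : z = (‖z‖ * Real.cos α, ‖z‖ * Real.sin α)) :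
    ∫ θ in (0:ℝ)..(2*π),
        ((Real.sin θ)^2 : ℂ) * Complex.exp (Complex.I * (k * ‖z‖ * Real.cos (θ - α)))
      = (π * besselJ0 (k * ‖z‖) : ℝ) + (π * Real.cos (2*α) * besselJ2 (k * ‖z‖) : ℝ) :=
  circle_integral_sin_sq_exp_general z α k
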